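/- In the local model, let a, b, c be real numbers with a·c − b² ≠ 0, let V = Σ_h V^h ∂/∂x^h be a smooth vector field on U whose complete lift X^C is conformal for the lift metric g̃ = a g₁ + b g₂ + c g₃ with factor Ω, and define A^m_a = Σ_h Γ^m_{ah} V^h + ∂_a V^m. Then for all indices i, j and all points of TU: 2 Ω g_{ij} = Σ_m ( g_{mj} A^m_i + g_{mi} A^m_j ). -/

import Mathlib

open scoped BigOperators

namespace TangentLift

/-- A point of the tangent bundle `TU = U × ℝⁿ` in coordinates `(x, y)`. -/
abbrev Pt (n : ℕ) := (Fin n → ℝ) × (Fin n → ℝ)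

variable {n : ℕ}

/-- Partial derivative `∂_i f` of a function on `ℝⁿ`. -/
noncomputable def pd (i : Fin n) (f : (Fin n → ℝ) → ℝ) (x : Fin n → ℝ) : ℝ :=
  fderiv ℝ f x (Pi.single i 1)

/-- The Christoffel symbols `Γ^k_{ij}` of a metric `g` given in coordinates. -/
noncomputable def Gam (g : (Fin n → ℝ) → Matrix (Fin n) (Fin n) ℝ)
    (k i j : Fin n) (x : Fin n → ℝ) : ℝ :=
  (1 / 2) * ∑ m, (g x)⁻¹ k m *
    (pd i (fun z => g z m j) x + pd j (fun z => g z m i) x - pd m (fun z => g z i j) x)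

/-- The curvature tensor `K_{ijk}{}^m` of the metric `g`. -/
noncomputable def Curv (g : (Fin n → ℝ) → Matrix (Fin n) (Fin n) ℝ)
    (i j k m : Fin n) (x : Fin n → ℝ) : ℝ :=
  pd i (Gam g m j k) x - pd j (Gam g m i k) x
    + ∑ a, (Gam g m i a x * Gam g a j k x - Gam g m j a x * Gam g a i k x)

/-- The horizontal adapted frame field `X_h(x,y) = ∂/∂x^h − Σ_{a,m} y^a Γ^m_{ah}(x) ∂/∂y^m`. -/
noncomputable def XH (g : (Fin n → ℝ) → Matrix (Fin n) (Fin n) ℝ) (h : Fin n) (p : Pt n) :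
    Pt n :=
  (Pi.single h 1, fun m => -∑ a, p.2 a * Gam g m a h p.1)

/-- The vertical adapted frame field `X_h̄(x,y) = ∂/∂y^h`. -/
noncomputable def XV (h : Fin n) (_p : Pt n) : Pt n := (0, Pi.single h 1)

/-- Lie bracket of vector fields on `U × ℝⁿ`: `[V,W](p) = DW(p)(V(p)) − DV(p)(W(p))`. -/
noncomputable def lie (V W : Pt n → Pt n) (p : Pt n) : Pt n :=
  fderiv ℝ W p (V p) - fderiv ℝ V p (W p)

/-- Directional derivative of a function on `TU` along the vector field `Z`. -/
noncomputable def dirD (Z : Pt n → Pt n) (f : Pt n → ℝ) (p : Pt n) : ℝ :=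
  fderiv ℝ f p (Z p)

/-- The vertical components of a tangent vector `v` at `p` in the adapted frame,
i.e. the coefficients of the `X_m̄` in the expansion of `v`. -/
noncomputable def ver (g : (Fin n → ℝ) → Matrix (Fin n) (Fin n) ℝ) (p : Pt n) (v : Pt n) :
    Fin n → ℝ :=
  fun m => v.2 m + ∑ a, ∑ i, p.2 a * Gam g m a i p.1 * v.1 i

/-- The bilinear-form field `g₁` on `TU`: `g₁(X_i,X_j) = g_{ij}`, vanishing on vertical
arguments. -/
noncomputable def g1 (g : (Fin n → ℝ) → Matrix (Fin n) (Fin n) ℝ) (p : Pt n) (v w : Pt n) : ℝ :=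
  ∑ i, ∑ j, g p.1 i j * v.1 i * w.1 j

/-- The bilinear-form field `g₂` on `TU`: `g₂(X_i,X_j̄) = g₂(X_j̄,X_i) = g_{ij}`, vanishing on
two horizontal or two vertical arguments. -/
noncomputable def g2 (g : (Fin n → ℝ) → Matrix (Fin n) (Fin n) ℝ) (p : Pt n) (v w : Pt n) : ℝ :=
  ∑ i, ∑ j, g p.1 i j * (v.1 i * ver g p w j + w.1 i * ver g p v j)

/-- The bilinear-form field `g₃` on `TU`: `g₃(X_ī,X_j̄) = g_{ij}`, vanishing on horizontal
arguments. -/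
noncomputable def g3 (g : (Fin n → ℝ) → Matrix (Fin n) (Fin n) ℝ) (p : Pt n) (v w : Pt n) : ℝ :=
  ∑ i, ∑ j, g p.1 i j * ver g p v i * ver g p w j

/-- The lift metric `g̃ = a g₁ + b g₂ + c g₃` on `TU`. -/
noncomputable def gLift (g : (Fin n → ℝ) → Matrix (Fin n) (Fin n) ℝ) (a b c : ℝ)
    (p : Pt n) (v w : Pt n) : ℝ :=
  a * g1 g p v w + b * g2 g p v w + c * g3 g p v w

/-- Lie derivative of a field `S` of bilinear forms along the vector field `X`, evaluated on
the vector fields `V`, `W` at the point `p`: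
`(L_X S)(V,W) = X·(S(V,W)) − S([X,V],W) − S(V,[X,W])`. -/
noncomputable def lieDer (X : Pt n → Pt n) (S : Pt n → Pt n → Pt n → ℝ)
    (V W : Pt n → Pt n) (p : Pt n) : ℝ :=
  dirD X (fun q => S q (V q) (W q)) p - S p (lie X V p) (W p) - S p (V p) (lie X W p)

/-- `g` is a Riemannian metric on `U` given in coordinates: each component is smooth on `U`,
and at each point of `U` the matrix `(g_{ij})` is symmetric positive definite. -/
def IsMetric (U : Set (Fin n → ℝ)) (g : (Fin n → ℝ) → Matrix (Fin n) (Fin n) ℝ) : Prop :=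
  (∀ i j, ContDiffOn ℝ (⊤ : ℕ∞) (fun x => g x i j) U) ∧
    (∀ x ∈ U, (g x).IsSymm) ∧ (∀ x ∈ U, (g x).PosDef)

/-- The vector field `X = Σ_h X^h X_h + Σ_h X^h̄ X_h̄` on `TU` with the given components in
the adapted frame; for a fiber-preserving field the `X^h` are functions of `x` alone. -/
noncomputable def mkVF (g : (Fin n → ℝ) → Matrix (Fin n) (Fin n) ℝ)
    (Xh' : Fin n → (Fin n → ℝ) → ℝ) (Xv' : Fin n → Pt n → ℝ) (p : Pt n) : Pt n :=
  (∑ h, Xh' h p.1 • XH g h p) + ∑ h, Xv' h p • XV h p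

/-- Smoothness of the components of a fiber-preserving vector field on `TU`. -/
def SmoothComponents (U : Set (Fin n → ℝ)) (Xh' : Fin n → (Fin n → ℝ) → ℝ)
    (Xv' : Fin n → Pt n → ℝ) : Prop :=
  (∀ h, ContDiffOn ℝ (⊤ : ℕ∞) (Xh' h) U) ∧ (∀ h, ContDiffOn ℝ (⊤ : ℕ∞) (Xv' h) (U ×ˢ Set.univ))

/-- `X` is a conformal vector field for the lift metric `g̃ = a g₁ + b g₂ + c g₃` with
conformal factor `Ω`, i.e. `L_X g̃ = 2 Ω g̃` as fields of bilinear forms on `TU`, tested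
against all smooth vector fields on `TU`. -/
def Conformal (U : Set (Fin n → ℝ)) (g : (Fin n → ℝ) → Matrix (Fin n) (Fin n) ℝ)
    (a b c : ℝ) (X : Pt n → Pt n) (Ω : Pt n → ℝ) : Prop :=
  ∀ V W : Pt n → Pt n, ContDiffOn ℝ (⊤ : ℕ∞) V (U ×ˢ Set.univ) → ContDiffOn ℝ (⊤ : ℕ∞) W (U ×ˢ Set.univ) →
    ∀ p : Pt n, p.1 ∈ U →
      lieDer X (gLift g a b c) V W p = 2 * Ω p * gLift g a b c p (V p) (W p)

/-- The components `(L_V g)_{ij}` of the Lie derivative of `g` along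
`V = Σ_h V^h ∂/∂x^h` on `U`. -/
noncomputable def lieG (g : (Fin n → ℝ) → Matrix (Fin n) (Fin n) ℝ)
    (Vf : Fin n → (Fin n → ℝ) → ℝ) (i j : Fin n) (x : Fin n → ℝ) : ℝ :=
  ∑ a, (Vf a x * pd a (fun z => g z i j) x + pd i (Vf a) x * g x a j + pd j (Vf a) x * g x i a)

/-- The covariant derivative `∇_i V^m = ∂_i V^m + Σ_a Γ^m_{ia} V^a`. -/
noncomputable def covD (g : (Fin n → ℝ) → Matrix (Fin n) (Fin n) ℝ)
    (Vf : Fin n → (Fin n → ℝ) → ℝ) (i m : Fin n) (x : Fin n → ℝ) : ℝ :=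
  pd i (Vf m) x + ∑ a, Gam g m i a x * Vf a x

/-- The complete lift `X^C = Σ_h V^h X_h + Σ_{h,m} y^m (Σ_a Γ^h_{ma} V^a + ∂_m V^h) X_h̄`
of the vector field `V = Σ_h V^h ∂/∂x^h` on `U`. -/
noncomputable def completeLift (g : (Fin n → ℝ) → Matrix (Fin n) (Fin n) ℝ)
    (Vf : Fin n → (Fin n → ℝ) → ℝ) (p : Pt n) : Pt n :=
  (∑ h, Vf h p.1 • XH g h p)
    + ∑ h, (∑ m, p.2 m * ((∑ a, Gam g h m a p.1 * Vf a p.1) + pd m (Vf h) p.1)) • XV h p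

/-- The vertical lift `X^V = Σ_h V^h X_h̄` of `V = Σ_h V^h ∂/∂x^h`. -/
noncomputable def vertLift (Vf : Fin n → (Fin n → ℝ) → ℝ) (p : Pt n) : Pt n :=
  ∑ h, Vf h p.1 • XV h p

/-- The horizontal lift `X^H = Σ_h V^h X_h` of `V = Σ_h V^h ∂/∂x^h`. -/
noncomputable def horLift (g : (Fin n → ℝ) → Matrix (Fin n) (Fin n) ℝ)
    (Vf : Fin n → (Fin n → ℝ) → ℝ) (p : Pt n) : Pt n :=
  ∑ h, Vf h p.1 • XH g h p


/-! ### Auxiliary lemmas -/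

lemma completeLift_eq (g : (Fin n → ℝ) → Matrix (Fin n) (Fin n) ℝ)
    (Vf : Fin n → (Fin n → ℝ) → ℝ) (q : Pt n) :
    completeLift g Vf q =
      ((fun k => Vf k q.1), fun m => ∑ a, q.2 a * pd a (Vf m) q.1) := by
  unfold completeLift XH XV
  refine Prod.ext ?_ ?_
  · funext k
    simp [Prod.fst_sum, Finset.sum_apply, Pi.single_apply]
  · funext m
    simp only [Prod.snd_sum, Prod.smul_mk, Finset.sum_apply, Pi.smul_apply, smul_eq_mul,
      Prod.snd_add, Pi.add_apply, Prod.fst_sum]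
    simp only [Pi.single_apply, mul_ite, mul_one, mul_zero, Finset.sum_ite_eq,
      Finset.mem_univ, if_true, mul_add, mul_neg, Finset.mul_sum, Finset.sum_neg_distrib]
    rw [show (∑ x, ∑ i, Vf x q.1 * (q.2 i * Gam g m i x q.1))
        = ∑ x, ∑ i, q.2 x * (Gam g m x i q.1 * Vf i q.1) from by
      rw [Finset.sum_comm]
      exact Finset.sum_congr rfl fun _ _ => Finset.sum_congr rfl fun _ _ => by ring]
    rw [Finset.sum_add_distrib]
    ring

lemma pd_symm {U : Set (Fin n → ℝ)} (hU : IsOpen U)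
    {g : (Fin n → ℝ) → Matrix (Fin n) (Fin n) ℝ} (hg : IsMetric U g)
    {x : Fin n → ℝ} (hx : x ∈ U) (i j k : Fin n) :
    pd k (fun z => g z i j) x = pd k (fun z => g z j i) x := by
  unfold pd
  congr 1
  apply Filter.EventuallyEq.fderiv_eq
  filter_upwards [hU.mem_nhds hx] with z hz
  exact (hg.2.1 z hz).apply j i

lemma gcontr {U : Set (Fin n → ℝ)}
    {g : (Fin n → ℝ) → Matrix (Fin n) (Fin n) ℝ} (hg : IsMetric U g)
    {x : Fin n → ℝ} (hx : x ∈ U) (j i h : Fin n) :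
    ∑ m, g x m j * Gam g m i h x
      = (1/2) * (pd i (fun z => g z j h) x + pd h (fun z => g z j i) x
          - pd j (fun z => g z i h) x) := by
  have hinv : (g x) * (g x)⁻¹ = 1 :=
    Matrix.mul_nonsing_inv _ ((hg.2.2 x hx).det_pos.ne').isUnit
  have hsym : ∀ m j' : Fin n, g x m j' = g x j' m := fun m j' =>
    (hg.2.1 x hx).apply j' m
  calc ∑ m, g x m j * Gam g m i h x
      = ∑ m, ∑ k, g x j m * (g x)⁻¹ m k *
          ((1/2) * (pd i (fun z => g z k h) x + pd h (fun z => g z k i) x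
            - pd k (fun z => g z i h) x)) := by
        refine Finset.sum_congr rfl fun m _ => ?_
        simp only [Gam, Finset.mul_sum]
        refine Finset.sum_congr rfl fun k _ => ?_
        rw [hsym m j]
        ring
    _ = ∑ k, (∑ m, g x j m * (g x)⁻¹ m k) *
          ((1/2) * (pd i (fun z => g z k h) x + pd h (fun z => g z k i) x
            - pd k (fun z => g z i h) x)) := by
        rw [Finset.sum_comm]
        exact Finset.sum_congr rfl fun k _ => (Finset.sum_mul ..).symm
    _ = ∑ k, (1 : Matrix (Fin n) (Fin n) ℝ) j k *
          ((1/2) * (pd i (fun z => g z k h) x + pd h (fun z => g z k i) x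
            - pd k (fun z => g z i h) x)) := by
        refine Finset.sum_congr rfl fun k _ => ?_
        rw [← Matrix.mul_apply, hinv]
    _ = _ := by simp [Matrix.one_apply]

lemma contraction {U : Set (Fin n → ℝ)} (hU : IsOpen U)
    {g : (Fin n → ℝ) → Matrix (Fin n) (Fin n) ℝ} (hg : IsMetric U g)
    {x : Fin n → ℝ} (hx : x ∈ U) (i j h : Fin n) :
    ∑ m, (g x m j * Gam g m i h x + g x m i * Gam g m j h x)
      = pd h (fun z => g z i j) x := by
  rw [Finset.sum_add_distrib, gcontr hg hx j i h, gcontr hg hx i j h,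
    pd_symm hU hg hx j i h, pd_symm hU hg hx j h i, pd_symm hU hg hx i h j]
  ring

lemma clm_apply_eq_sum (φ : ((Fin n) → ℝ) →L[ℝ] ℝ) (v : Fin n → ℝ) :
    φ v = ∑ a, v a * φ (Pi.single a 1) := by
  have hv : v = ∑ a, v a • (Pi.single a 1 : Fin n → ℝ) := by
    funext k; simp [Finset.sum_apply, Pi.single_apply]
  conv_lhs => rw [hv]
  rw [map_sum]
  simp [smul_eq_mul]

/-- The explicit derivative of the complete lift at a point over `U`. -/
noncomputable def clDeriv (g : (Fin n → ℝ) → Matrix (Fin n) (Fin n) ℝ)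
    (Vf : Fin n → (Fin n → ℝ) → ℝ) (p : Pt n) : Pt n →L[ℝ] Pt n :=
  (ContinuousLinearMap.pi fun k => (fderiv ℝ (Vf k) p.1).comp
      (ContinuousLinearMap.fst ℝ (Fin n → ℝ) (Fin n → ℝ))).prod
    (ContinuousLinearMap.pi fun m => ∑ a : Fin n,
      (p.2 a • ((fderiv ℝ (pd a (Vf m)) p.1).comp
          (ContinuousLinearMap.fst ℝ (Fin n → ℝ) (Fin n → ℝ)))
        + pd a (Vf m) p.1 • ((ContinuousLinearMap.proj a).comp
          (ContinuousLinearMap.snd ℝ (Fin n → ℝ) (Fin n → ℝ)))))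

lemma hasFDerivAt_completeLift {U : Set (Fin n → ℝ)} (hU : IsOpen U)
    (g : (Fin n → ℝ) → Matrix (Fin n) (Fin n) ℝ)
    {Vf : Fin n → (Fin n → ℝ) → ℝ} (hVf : ∀ h, ContDiffOn ℝ (⊤ : ℕ∞) (Vf h) U)
    (p : Pt n) (hx : p.1 ∈ U) :
    HasFDerivAt (completeLift g Vf) (clDeriv g Vf p) p := by
  have hdiff : ∀ k, DifferentiableAt ℝ (Vf k) p.1 := fun k =>
    ((hVf k).contDiffAt (hU.mem_nhds hx)).differentiableAt (by simp)
  have hpd : ∀ a m, DifferentiableAt ℝ (pd a (Vf m)) p.1 := by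
    intro a m
    have hca : ContDiffAt ℝ (⊤ : ℕ∞) (Vf m) p.1 := (hVf m).contDiffAt (hU.mem_nhds hx)
    have h1 : ContDiffAt ℝ (⊤ : ℕ∞) (fderiv ℝ (Vf m)) p.1 := hca.fderiv_right (by simp)
    have h2 : ContDiffAt ℝ (⊤ : ℕ∞) (fun z => fderiv ℝ (Vf m) z (Pi.single a 1)) p.1 :=
      h1.clm_apply contDiffAt_const
    exact h2.differentiableAt (by simp)
  have hXc : completeLift g Vf
      = fun q : Pt n => ((fun k => Vf k q.1), fun m => ∑ a, q.2 a * pd a (Vf m) q.1) :=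
    funext (completeLift_eq g Vf)
  rw [hXc]
  apply HasFDerivAt.prodMk
  · exact hasFDerivAt_pi.2 fun k =>
      HasFDerivAt.comp p ((hdiff k).hasFDerivAt) hasFDerivAt_fst
  · refine hasFDerivAt_pi.2 fun m => ?_
    refine HasFDerivAt.fun_sum fun a _ => ?_
    have h1 : HasFDerivAt (fun q : Pt n => q.2 a)
        ((ContinuousLinearMap.proj a).comp
          (ContinuousLinearMap.snd ℝ (Fin n → ℝ) (Fin n → ℝ))) p :=
      ((ContinuousLinearMap.proj a).comp
        (ContinuousLinearMap.snd ℝ (Fin n → ℝ) (Fin n → ℝ))).hasFDerivAt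
    have h2 : HasFDerivAt (fun q : Pt n => pd a (Vf m) q.1)
        ((fderiv ℝ (pd a (Vf m)) p.1).comp
          (ContinuousLinearMap.fst ℝ (Fin n → ℝ) (Fin n → ℝ))) p :=
      HasFDerivAt.comp p ((hpd a m).hasFDerivAt) hasFDerivAt_fst
    exact h1.mul h2

lemma lie_const (X : Pt n → Pt n) (v : Pt n) (p : Pt n) :
    lie X (fun _ => v) p = -(fderiv ℝ X p v) := by
  simp [lie, fderiv_const]

lemma lie_vert_eval {U : Set (Fin n → ℝ)} (hU : IsOpen U)
    (g : (Fin n → ℝ) → Matrix (Fin n) (Fin n) ℝ)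
    {Vf : Fin n → (Fin n → ℝ) → ℝ} (hVf : ∀ h, ContDiffOn ℝ (⊤ : ℕ∞) (Vf h) U)
    (p : Pt n) (hx : p.1 ∈ U) (i : Fin n) :
    lie (completeLift g Vf) (fun _ => ((0 : Fin n → ℝ), Pi.single i (1:ℝ))) p
      = ((0 : Fin n → ℝ), fun m => -(pd i (Vf m) p.1)) := by
  rw [lie_const, (hasFDerivAt_completeLift hU g hVf p hx).fderiv]
  unfold clDeriv
  refine Prod.ext ?_ ?_
  · funext k
    simp
  · funext m
    simp [Pi.single_apply, mul_ite, Finset.sum_ite_eq]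

lemma lie_hor_eval_fst {U : Set (Fin n → ℝ)} (hU : IsOpen U)
    (g : (Fin n → ℝ) → Matrix (Fin n) (Fin n) ℝ)
    {Vf : Fin n → (Fin n → ℝ) → ℝ} (hVf : ∀ h, ContDiffOn ℝ (⊤ : ℕ∞) (Vf h) U)
    (p : Pt n) (hx : p.1 ∈ U) (j : Fin n) :
    (lie (completeLift g Vf) (fun _ => (Pi.single j (1:ℝ), (0 : Fin n → ℝ))) p).1
      = fun k => -(pd j (Vf k) p.1) := by
  rw [lie_const, (hasFDerivAt_completeLift hU g hVf p hx).fderiv]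
  unfold clDeriv
  funext k
  simp [pd]

lemma ver_vert (g : (Fin n → ℝ) → Matrix (Fin n) (Fin n) ℝ) (q : Pt n) (u : Fin n → ℝ) :
    ver g q ((0 : Fin n → ℝ), u) = u := by
  funext m; simp [ver]

lemma gLift_vert_fst (g : (Fin n → ℝ) → Matrix (Fin n) (Fin n) ℝ) (a b c : ℝ)
    (q : Pt n) (u : Fin n → ℝ) (w : Pt n) :
    gLift g a b c q ((0 : Fin n → ℝ), u) w
      = b * (∑ k, ∑ l, g q.1 k l * (w.1 k * u l))
        + c * (∑ k, ∑ l, g q.1 k l * u k * ver g q w l) := by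
  unfold gLift g1 g2 g3
  rw [ver_vert]
  simp

/-- Suppose the complete lift `X^C` of `V` is conformal for
`g̃ = a g₁ + b g₂ + c g₃` (with `a·c − b² ≠ 0`) with factor `Ω`, and let
`A^m_a = Σ_h Γ^m_{ah} V^h + ∂_a V^m`. Then
`2 Ω g_{ij} = Σ_m (g_{mj} A^m_i + g_{mi} A^m_j)` on `TU`. -/
theorem completeLift_conformal_rel4 (n : ℕ) (hn : 1 ≤ n) (U : Set (Fin n → ℝ))
    (hU : IsOpen U) (g : (Fin n → ℝ) → Matrix (Fin n) (Fin n) ℝ) (hg : IsMetric U g)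
    (a b c : ℝ) (habc : a * c - b ^ 2 ≠ 0)
    (Vf : Fin n → (Fin n → ℝ) → ℝ) (hVf : ∀ h, ContDiffOn ℝ (⊤ : ℕ∞) (Vf h) U)
    (Ω : Pt n → ℝ) (hΩ : ContDiffOn ℝ (⊤ : ℕ∞) Ω (U ×ˢ Set.univ))
    (hconf : Conformal U g a b c (completeLift g Vf) Ω)
    (A : Fin n → Fin n → (Fin n → ℝ) → ℝ)
    (hA : ∀ m a' x, A m a' x = (∑ h, Gam g m a' h x * Vf h x) + pd a' (Vf m) x) :
    ∀ i j : Fin n, ∀ p : Pt n, p.1 ∈ U →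
      2 * Ω p * g p.1 i j = ∑ m, (g p.1 m j * A m i p.1 + g p.1 m i * A m j p.1) := by
  intro i j p hp
  have hsym : ∀ m j' : Fin n, g p.1 m j' = g p.1 j' m := fun m j' =>
    (hg.2.1 p.1 hp).apply j' m
  have hgd : ∀ i' j' : Fin n, DifferentiableAt ℝ (fun z => g z i' j') p.1 := fun i' j' =>
    ((hg.1 i' j').contDiffAt (hU.mem_nhds hp)).differentiableAt (by simp)
  -- the common expression E
  set E : ℝ := (∑ a', Vf a' p.1 * pd a' (fun z => g z i j) p.1)
      + (∑ k, g p.1 k j * pd i (Vf k) p.1) + (∑ k, g p.1 k i * pd j (Vf k) p.1) with hE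
  -- directional derivative computation, for any coefficient r and symmetric entry
  have hdir : ∀ (r : ℝ) (i' j' : Fin n),
      dirD (completeLift g Vf) (fun q => r * g q.1 i' j') p
        = r * ∑ a', Vf a' p.1 * pd a' (fun z => g z i' j') p.1 := by
    intro r i' j'
    unfold dirD
    have hF : HasFDerivAt (fun q : Pt n => r * g q.1 i' j')
        (r • ((fderiv ℝ (fun z => g z i' j') p.1).comp
          (ContinuousLinearMap.fst ℝ (Fin n → ℝ) (Fin n → ℝ)))) p :=
      ((hgd i' j').hasFDerivAt.comp p hasFDerivAt_fst).const_mul r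
    rw [hF.fderiv]
    rw [completeLift_eq]
    simp only [ContinuousLinearMap.coe_smul', Pi.smul_apply,
      ContinuousLinearMap.coe_comp', Function.comp_apply,
      ContinuousLinearMap.coe_fst', smul_eq_mul]
    rw [clm_apply_eq_sum]
    rfl
  -- step 1: E = 2 Ω p * g_ij
  have hmain : E = 2 * Ω p * g p.1 i j := by
    rcases eq_or_ne c 0 with hc | hc
    · -- c = 0, use vertical-horizontal pair; b ≠ 0
      subst hc
      have hb : b ≠ 0 := fun hb => habc (by rw [hb]; ring)
      have h := hconf (fun _ => ((0 : Fin n → ℝ), Pi.single i (1:ℝ)))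
        (fun _ => (Pi.single j (1:ℝ), (0 : Fin n → ℝ)))
        contDiffOn_const contDiffOn_const p hp
      unfold lieDer at h
      have hfun : (fun q : Pt n => gLift g a b 0 q ((0 : Fin n → ℝ), Pi.single i (1:ℝ))
          (Pi.single j (1:ℝ), (0 : Fin n → ℝ))) = fun q => b * g q.1 j i := by
        funext q
        rw [gLift_vert_fst]
        simp [Pi.single_apply, mul_ite, ite_mul, Finset.sum_ite_eq, Finset.sum_ite_eq']
      rw [hfun, hdir b j i] at h
      rw [lie_vert_eval hU g hVf p hp i] at h
      rw [gLift_vert_fst, gLift_vert_fst, gLift_vert_fst] at h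
      have hw1 := lie_hor_eval_fst hU g hVf p hp j
      rw [hw1] at h
      simp only [zero_mul, mul_zero, add_zero, Pi.single_apply, mul_ite, ite_mul,
        mul_one, one_mul, Finset.sum_ite_eq, Finset.sum_ite_eq', Finset.mem_univ,
        if_true, mul_neg, neg_mul, Finset.sum_neg_distrib, Finset.sum_ite_irrel,
        Finset.sum_const_zero, zero_add, Pi.zero_apply, neg_zero] at h
      simp only [show ∀ a' : Fin n, pd a' (fun z => g z j i) p.1
          = pd a' (fun z => g z i j) p.1 from fun a' => pd_symm hU hg hp j i a',
        show ∀ k : Fin n, g p.1 j k = g p.1 k j from fun k => hsym j k] at h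
      apply mul_left_cancel₀ hb
      rw [hE]
      linear_combination h
    · -- c ≠ 0, use the vertical-vertical pair
      have h := hconf (fun _ => ((0 : Fin n → ℝ), Pi.single i (1:ℝ)))
        (fun _ => ((0 : Fin n → ℝ), Pi.single j (1:ℝ)))
        contDiffOn_const contDiffOn_const p hp
      unfold lieDer at h
      have hfun : (fun q : Pt n => gLift g a b c q ((0 : Fin n → ℝ), Pi.single i (1:ℝ))
          ((0 : Fin n → ℝ), Pi.single j (1:ℝ))) = fun q => c * g q.1 i j := by
        funext q
        rw [gLift_vert_fst, ver_vert]
        simp [Pi.single_apply, mul_ite, ite_mul, Finset.sum_ite_eq, Finset.sum_ite_eq']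
      rw [hfun, hdir c i j] at h
      rw [lie_vert_eval hU g hVf p hp i, lie_vert_eval hU g hVf p hp j] at h
      rw [gLift_vert_fst, gLift_vert_fst, gLift_vert_fst] at h
      simp only [ver_vert] at h
      simp only [zero_mul, mul_zero, add_zero, Pi.single_apply, mul_ite, ite_mul,
        mul_one, one_mul, Finset.sum_ite_eq, Finset.sum_ite_eq', Finset.mem_univ,
        if_true, mul_neg, neg_mul, Finset.sum_neg_distrib, Finset.sum_ite_irrel,
        Finset.sum_const_zero, zero_add, Pi.zero_apply, neg_zero] at h
      simp only [show ∀ k : Fin n, g p.1 i k * pd j (Vf k) p.1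
          = g p.1 k i * pd j (Vf k) p.1 from fun k => by rw [hsym i k]] at h
      apply mul_left_cancel₀ hc
      rw [hE]
      linear_combination h
  -- step 2: the right-hand side equals E
  have hRHS : ∑ m, (g p.1 m j * A m i p.1 + g p.1 m i * A m j p.1) = E := by
    calc ∑ m, (g p.1 m j * A m i p.1 + g p.1 m i * A m j p.1)
        = ∑ m, ((∑ h', (g p.1 m j * Gam g m i h' p.1 * Vf h' p.1
              + g p.1 m i * Gam g m j h' p.1 * Vf h' p.1))
            + (g p.1 m j * pd i (Vf m) p.1 + g p.1 m i * pd j (Vf m) p.1)) := by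
          refine Finset.sum_congr rfl fun m _ => ?_
          rw [hA, hA]
          simp only [mul_add, Finset.mul_sum, Finset.sum_add_distrib]
          ring
      _ = (∑ m, ∑ h', (g p.1 m j * Gam g m i h' p.1 * Vf h' p.1
              + g p.1 m i * Gam g m j h' p.1 * Vf h' p.1))
            + ∑ m, (g p.1 m j * pd i (Vf m) p.1 + g p.1 m i * pd j (Vf m) p.1) :=
          Finset.sum_add_distrib
      _ = (∑ h', (∑ m, (g p.1 m j * Gam g m i h' p.1 + g p.1 m i * Gam g m j h' p.1))
              * Vf h' p.1)
            + ∑ m, (g p.1 m j * pd i (Vf m) p.1 + g p.1 m i * pd j (Vf m) p.1) := by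
          rw [Finset.sum_comm]
          congr 1
          refine Finset.sum_congr rfl fun h' _ => ?_
          rw [Finset.sum_mul]
          refine Finset.sum_congr rfl fun m _ => by ring
      _ = (∑ h', pd h' (fun z => g z i j) p.1 * Vf h' p.1)
            + ∑ m, (g p.1 m j * pd i (Vf m) p.1 + g p.1 m i * pd j (Vf m) p.1) := by
          congr 1
          exact Finset.sum_congr rfl fun h' _ => by
            rw [contraction hU hg hp i j h']
      _ = E := by
          rw [hE, Finset.sum_add_distrib]
          rw [show (∑ h', pd h' (fun z => g z i j) p.1 * Vf h' p.1)
              = ∑ a', Vf a' p.1 * pd a' (fun z => g z i j) p.1 from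
            Finset.sum_congr rfl fun _ _ => by ring]
          ring
  rw [hRHS, hmain]

end TangentLift
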